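/- arXiv:2511.07674 — 2 statements merged into one kernel-verified Lean document; each statement's English description precedes it below -/
import Mathlib

section
/- Let V and W be persistence modules and suppose there exists a degree-ε morphism F : V → W[ε] (i.e. maps F_t : V_t → W_{t+ε} natural in t) such that both Ker(F) and Coker(F) are ε-interleaved with the zero module; more concretely, suppose the structure maps of Ker(F) of shift 2ε and of Coker(F) of shift 2ε vanish. Then V and W are 3ε-interleaved. -/
open scoped ENNReal

/-- A persistence module indexed by `(ℝ, ≤)`: a functor from `(ℝ, ≤)` to
`𝕜`-vector spaces, given by spaces `V t` and transition maps `φ`. -/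
structure PersMod (𝕜 : Type) [Field 𝕜] where
  V : ℝ → Type
  [addGrp : ∀ t, AddCommGroup (V t)]
  [modStr : ∀ t, Module 𝕜 (V t)]
  φ : ∀ {s t : ℝ}, s ≤ t → (V s →ₗ[𝕜] V t)
  φ_id : ∀ t : ℝ, φ (le_refl t) = LinearMap.id
  φ_comp : ∀ {s t u : ℝ} (h₁ : s ≤ t) (h₂ : t ≤ u) (x : V s),
    φ h₂ (φ h₁ x) = φ (h₁.trans h₂) x

attribute [instance] PersMod.addGrp PersMod.modStr

/-- A `δ`-interleaving between persistence modules: a pair of degree-`δ`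
morphisms whose compositions are the `2δ`-shift transition maps. -/
def Interleaving {𝕜 : Type} [Field 𝕜] (Vm Wm : PersMod 𝕜) (δ : ℝ) (hδ : 0 ≤ δ) : Prop :=
  ∃ (F : ∀ t, Vm.V t →ₗ[𝕜] Wm.V (t + δ)) (G : ∀ t, Wm.V t →ₗ[𝕜] Vm.V (t + δ)),
    (∀ (s t : ℝ) (h : s ≤ t) (x : Vm.V s),
        F t (Vm.φ h x) = Wm.φ (by linarith : s + δ ≤ t + δ) (F s x)) ∧
    (∀ (s t : ℝ) (h : s ≤ t) (x : Wm.V s),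
        G t (Wm.φ h x) = Vm.φ (by linarith : s + δ ≤ t + δ) (G s x)) ∧
    (∀ (t : ℝ) (x : Vm.V t), G (t + δ) (F t x) = Vm.φ (by linarith : t ≤ t + δ + δ) x) ∧
    (∀ (t : ℝ) (x : Wm.V t), F (t + δ) (G t x) = Wm.φ (by linarith : t ≤ t + δ + δ) x)

/-- If `F : V → W[ε]` is a degree-`ε` morphism such that the `2ε`-shift
structure maps of `Ker(F)` and of `Coker(F)` vanish (i.e. `Ker(F)` and `Coker(F)` are
ε-interleaved with the zero module), then `V` and `W` are `3ε`-interleaved. -/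
theorem interleaving_of_trivial_ker_coker {𝕜 : Type} [Field 𝕜] (Vm Wm : PersMod 𝕜)
    (ε : ℝ) (hε : 0 ≤ ε)
    (F : ∀ t : ℝ, Vm.V t →ₗ[𝕜] Wm.V (t + ε))
    (hF : ∀ (s t : ℝ) (h : s ≤ t) (x : Vm.V s),
        F t (Vm.φ h x) = Wm.φ (by linarith : s + ε ≤ t + ε) (F s x))
    -- vanishing of the 2ε-shift structure maps of Ker(F):
    (hker : ∀ (t : ℝ) (x : Vm.V t), F t x = 0 →
        Vm.φ (by linarith : t ≤ t + ε + ε) x = 0)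
    -- vanishing of the 2ε-shift structure maps of Coker(F):
    (hcoker : ∀ (t : ℝ) (w : Wm.V t), ∃ v : Vm.V (t + ε),
        Wm.φ (by linarith : t ≤ t + ε + ε) w = F (t + ε) v) :
    Interleaving Vm Wm (3 * ε) (by linarith) := by
  classical
  -- uniqueness up to 2ε-shift
  have uniq : ∀ (s u : ℝ) (h : s ≤ u) (h2 : s + ε + ε ≤ u) (v : Vm.V s),
      F s v = 0 → Vm.φ h v = 0 := by
    intro s u h h2 v hv
    have h1 : s ≤ s + ε + ε := by linarith
    have e : Vm.φ h v = Vm.φ h2 (Vm.φ h1 v) := (Vm.φ_comp h1 h2 v).symm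
    rw [e, hker s v hv, map_zero]
  set g : ∀ t : ℝ, Wm.V t → Vm.V (t + 3 * ε) := fun t w =>
    Vm.φ (by linarith : t + ε ≤ t + 3 * ε) (Classical.choose (hcoker t w)) with hg
  have gspec : ∀ (t : ℝ) (w : Wm.V t),
      Wm.φ (by linarith : t ≤ t + ε + ε) w = F (t + ε) (Classical.choose (hcoker t w)) :=
    fun t w => Classical.choose_spec (hcoker t w)
  have guniq : ∀ (t : ℝ) (w : Wm.V t) (v : Vm.V (t + ε)),
      Wm.φ (by linarith : t ≤ t + ε + ε) w = F (t + ε) v →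
      g t w = Vm.φ (by linarith : t + ε ≤ t + 3 * ε) v := by
    intro t w v hv
    have hz : F (t + ε) (Classical.choose (hcoker t w) - v) = 0 := by
      rw [map_sub, ← gspec t w, ← hv, sub_self]
    have := uniq (t + ε) (t + 3 * ε) (by linarith) (by linarith) _ hz
    rw [map_sub, sub_eq_zero] at this
    exact this
  -- G as linear maps
  set G : ∀ t : ℝ, Wm.V t →ₗ[𝕜] Vm.V (t + 3 * ε) := fun t =>
    { toFun := g t
      map_add' := by
        intro w w'
        have hv : Wm.φ (by linarith : t ≤ t + ε + ε) (w + w')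
            = F (t + ε) (Classical.choose (hcoker t w) + Classical.choose (hcoker t w')) := by
          rw [map_add, map_add]
          exact congrArg₂ (· + ·) (gspec t w) (gspec t w')
        show g t (w + w') = g t w + g t w'
        rw [guniq t (w + w') _ hv, map_add]
      map_smul' := by
        intro c w
        have hv : Wm.φ (by linarith : t ≤ t + ε + ε) (c • w)
            = F (t + ε) (c • Classical.choose (hcoker t w)) := by
          rw [map_smul, map_smul]
          exact congrArg (c • ·) (gspec t w)
        show g t (c • w) = (RingHom.id 𝕜) c • g t w
        rw [guniq t (c • w) _ hv, map_smul, RingHom.id_apply] } with hG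
  refine ⟨fun t => (Wm.φ (by linarith : t + ε ≤ t + 3 * ε)) ∘ₗ F t, G, ?_, ?_, ?_, ?_⟩
  · intro s t h x
    simp only [LinearMap.comp_apply]
    rw [hF s t h x, Wm.φ_comp, Wm.φ_comp]
  · intro s t h w
    have hv : Wm.φ (by linarith : t ≤ t + ε + ε) (Wm.φ h w)
        = F (t + ε) (Vm.φ (by linarith : s + ε ≤ t + ε) (Classical.choose (hcoker s w))) := by
      rw [hF, ← gspec s w, Wm.φ_comp, Wm.φ_comp]
    show g t (Wm.φ h w) = Vm.φ _ (g s w)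
    rw [guniq t (Wm.φ h w) _ hv, hg]
    simp only []
    rw [Vm.φ_comp, Vm.φ_comp]
  · intro t x
    have hv : Wm.φ (by linarith : t + 3 * ε ≤ t + 3 * ε + ε + ε)
          ((Wm.φ (by linarith : t + ε ≤ t + 3 * ε) ∘ₗ F t) x)
        = F (t + 3 * ε + ε) (Vm.φ (by linarith : t ≤ t + 3 * ε + ε) x) := by
      rw [hF t (t + 3 * ε + ε) (by linarith) x, LinearMap.comp_apply, Wm.φ_comp]
    show g (t + 3 * ε) _ = _
    rw [guniq (t + 3 * ε) _ _ hv, Vm.φ_comp]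
  · intro t w
    show (Wm.φ _ ∘ₗ F (t + 3 * ε)) (g t w) = _
    rw [LinearMap.comp_apply, hg]
    simp only []
    rw [hF (t + ε) (t + 3 * ε) (by linarith), ← gspec t w, Wm.φ_comp, Wm.φ_comp]
end

section
/- Let F : V → W and F' : V' → W' be morphisms of persistence modules, and suppose there exist degree-ε morphisms S : V → V', S' : V' → V forming an ε-interleaving of V with V', and degree-ε morphisms T : W → W', T' : W' → W forming an ε-interleaving of W with W', such that the squares commute up to shift: φ^{W'}_{ε} ∘ T ∘ F = F' ∘ φ^{V'}_{ε} ∘ S and symmetrically for S', T'. Then the maps φ ∘ S and φ ∘ S' restrict to kernels and yield a 2ε-interleaving between Ker(F) and Ker(F'). -/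
open scoped ENNReal

/-- Let `F : V → W` and `F' : V' → W'` be morphisms of persistence
modules, intertwined (up to an extra ε-shift) by ε-interleavings `(S, S')` of the
domains and `(T, T')` of the codomains. Then the shifted interleaving maps
`φ ∘ S` and `φ ∘ S'` restrict to the pointwise kernels and yield a
`2ε`-interleaving between `Ker(F)` and `Ker(F')`. -/
theorem kernel_interleaving {𝕜 : Type} [Field 𝕜]
    (Vm Wm Vm' Wm' : PersMod 𝕜) (ε : ℝ) (hε : 0 ≤ ε)
    (F : ∀ t : ℝ, Vm.V t →ₗ[𝕜] Wm.V t)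
    (F' : ∀ t : ℝ, Vm'.V t →ₗ[𝕜] Wm'.V t)
    (hF : ∀ (s t : ℝ) (h : s ≤ t) (x : Vm.V s), F t (Vm.φ h x) = Wm.φ h (F s x))
    (hF' : ∀ (s t : ℝ) (h : s ≤ t) (x : Vm'.V s), F' t (Vm'.φ h x) = Wm'.φ h (F' s x))
    (S : ∀ t : ℝ, Vm.V t →ₗ[𝕜] Vm'.V (t + ε)) (S' : ∀ t : ℝ, Vm'.V t →ₗ[𝕜] Vm.V (t + ε))
    (T : ∀ t : ℝ, Wm.V t →ₗ[𝕜] Wm'.V (t + ε)) (T' : ∀ t : ℝ, Wm'.V t →ₗ[𝕜] Wm.V (t + ε))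
    -- naturality of the interleaving maps:
    (hSnat : ∀ (s t : ℝ) (h : s ≤ t) (x : Vm.V s),
        S t (Vm.φ h x) = Vm'.φ (by linarith : s + ε ≤ t + ε) (S s x))
    (hS'nat : ∀ (s t : ℝ) (h : s ≤ t) (x : Vm'.V s),
        S' t (Vm'.φ h x) = Vm.φ (by linarith : s + ε ≤ t + ε) (S' s x))
    (hTnat : ∀ (s t : ℝ) (h : s ≤ t) (x : Wm.V s),
        T t (Wm.φ h x) = Wm'.φ (by linarith : s + ε ≤ t + ε) (T s x))
    (hT'nat : ∀ (s t : ℝ) (h : s ≤ t) (x : Wm'.V s),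
        T' t (Wm'.φ h x) = Wm.φ (by linarith : s + ε ≤ t + ε) (T' s x))
    -- the pairs (S, S') and (T, T') are ε-interleavings:
    (hSS' : ∀ (t : ℝ) (x : Vm.V t), S' (t + ε) (S t x) = Vm.φ (by linarith : t ≤ t + ε + ε) x)
    (hS'S : ∀ (t : ℝ) (x : Vm'.V t), S (t + ε) (S' t x) = Vm'.φ (by linarith : t ≤ t + ε + ε) x)
    (hTT' : ∀ (t : ℝ) (x : Wm.V t), T' (t + ε) (T t x) = Wm.φ (by linarith : t ≤ t + ε + ε) x)
    (hT'T : ∀ (t : ℝ) (x : Wm'.V t), T (t + ε) (T' t x) = Wm'.φ (by linarith : t ≤ t + ε + ε) x)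
    -- the squares commute up to the extra ε-shift:
    (hsq : ∀ (t : ℝ) (x : Vm.V t),
        Wm'.φ (by linarith : t + ε ≤ t + ε + ε) (T t (F t x)) =
          F' (t + ε + ε) (Vm'.φ (by linarith : t + ε ≤ t + ε + ε) (S t x)))
    (hsq' : ∀ (t : ℝ) (x : Vm'.V t),
        Wm.φ (by linarith : t + ε ≤ t + ε + ε) (T' t (F' t x)) =
          F (t + ε + ε) (Vm.φ (by linarith : t + ε ≤ t + ε + ε) (S' t x))) :
    -- the maps φ ∘ S and φ ∘ S' restrict to the kernels:
    (∀ (t : ℝ) (x : Vm.V t), F t x = 0 →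
        F' (t + ε + ε) (Vm'.φ (by linarith : t + ε ≤ t + ε + ε) (S t x)) = 0) ∧
    (∀ (t : ℝ) (x : Vm'.V t), F' t x = 0 →
        F (t + ε + ε) (Vm.φ (by linarith : t + ε ≤ t + ε + ε) (S' t x)) = 0) ∧
    -- and the restricted maps form a 2ε-interleaving of the kernels:
    (∀ (t : ℝ) (x : Vm.V t), F t x = 0 →
        Vm.φ (by linarith : t + ε + ε + ε ≤ t + ε + ε + ε + ε)
            (S' (t + ε + ε) (Vm'.φ (by linarith : t + ε ≤ t + ε + ε) (S t x))) =
          Vm.φ (by linarith : t ≤ t + ε + ε + ε + ε) x) ∧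
    (∀ (t : ℝ) (x : Vm'.V t), F' t x = 0 →
        Vm'.φ (by linarith : t + ε + ε + ε ≤ t + ε + ε + ε + ε)
            (S (t + ε + ε) (Vm.φ (by linarith : t + ε ≤ t + ε + ε) (S' t x))) =
          Vm'.φ (by linarith : t ≤ t + ε + ε + ε + ε) x) := by
  refine ⟨?_, ?_, ?_, ?_⟩
  · intro t x hx
    rw [← hsq t x, hx, map_zero, map_zero]
  · intro t x hx
    rw [← hsq' t x, hx, map_zero, map_zero]
  · intro t x _
    rw [hS'nat _ _ (by linarith : t + ε ≤ t + ε + ε) (S t x), Vm.φ_comp, hSS', Vm.φ_comp]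
  · intro t x _
    rw [hSnat _ _ (by linarith : t + ε ≤ t + ε + ε) (S' t x), Vm'.φ_comp, hS'S, Vm'.φ_comp]
end
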